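/- arXiv:2009.07120 — 2 statements merged into one kernel-verified Lean document; each statement's English description precedes it below -/
import Mathlib

section
/- For every n >= 7 with 4 not dividing n, the generalized Petersen graph GP(n,3) admits no perfect 2-coloring with parameter matrix [[0,3],[1,2]]. -/
/-- The generalized Petersen graph `GP n k`. Vertices are pairs `(s, i)` with
`s : Bool` (`false` = outer vertex `aᵢ`, `true` = inner vertex `bᵢ`) and `i : ZMod n`.
Edges: `aᵢ aᵢ₊₁`, `aᵢ bᵢ`, `bᵢ bᵢ₊ₖ`. -/
def GP (n k : ℕ) : SimpleGraph (Bool × ZMod n) :=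
  SimpleGraph.fromRel (fun v w =>
    (v.1 = false ∧ w.1 = false ∧ w.2 = v.2 + 1) ∨
    (v.1 = false ∧ w.1 = true ∧ w.2 = v.2) ∨
    (v.1 = true ∧ w.1 = true ∧ w.2 = v.2 + (k : ZMod n)))

/-- `T` is a perfect 2-coloring of `G` with parameter matrix `A`:
`T` is surjective onto the two colors (color `0` = white = "1", color `1` = black = "2"),
and every vertex of color `i` has exactly `A i j` neighbors of color `j`. -/
def IsPerfectColoring {V : Type*} (G : SimpleGraph V) (T : V → Fin 2)
    (A : Matrix (Fin 2) (Fin 2) ℕ) : Prop :=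
  Function.Surjective T ∧
  ∀ v : V, ∀ j : Fin 2, {w | G.Adj v w ∧ T w = j}.ncard = A (T v) j


/-! Color `0` ("white") of a perfect coloring with matrix `[[0,3],[1,2]]` is a perfect code:
every closed neighbourhood contains exactly one white vertex. In `GP n k` summing this over the
outer vertices counts each white outer vertex three times and each white inner vertex once,
so `3a + b = n`; summing over the inner vertices gives `a + 3b = n`. Hence `n = 4a`. -/

section PerfectCode

variable {V : Type*}

def whiteIndicator (T : V → Fin 2) (v : V) : ℕ := if T v = 0 then 1 else 0

variable {G : SimpleGraph V} {T : V → Fin 2}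

lemma ncard_adj_white_eq_sum {v : V} {s : Finset V}
    (hs : ∀ w, G.Adj v w ↔ w ∈ s) :
    {w | G.Adj v w ∧ T w = 0}.ncard = ∑ w ∈ s, whiteIndicator T w := by
  have hset : {w | G.Adj v w ∧ T w = 0} = ↑(s.filter (T · = 0)) := by ext w; simp [hs]
  rw [hset, Set.ncard_coe_finset, Finset.card_filter]
  rfl

lemma IsPerfectColoring.closedNbhd_white_eq_one (hT : IsPerfectColoring G T !![0, 3; 1, 2])
    (v : V) : {w | G.Adj v w ∧ T w = 0}.ncard + whiteIndicator T v = 1 := by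
  have h := hT.2 v 0
  obtain hv | hv : T v = 0 ∨ T v = 1 := by omega
  all_goals simp [whiteIndicator, hv] at h ⊢; omega

end PerfectCode

lemma ZMod.three_mul_sum_add_sum_eq {n : ℕ} [NeZero n] (f g : ZMod n → ℕ) (c : ZMod n)
    (h : ∀ i, f (i - c) + f (i + c) + g i + f i = 1) :
    3 * ∑ i, f i + ∑ i, g i = n := by
  have hsum := Finset.sum_congr rfl fun i (_ : i ∈ Finset.univ) => h i
  simp only [Finset.sum_add_distrib, Finset.sum_const, Finset.card_univ, ZMod.card,
    smul_eq_mul, mul_one] at hsum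
  rw [Fintype.sum_equiv (Equiv.subRight c) (fun i => f (i - c)) f fun _ => rfl,
    Fintype.sum_equiv (Equiv.addRight c) (fun i => f (i + c)) f fun _ => rfl] at hsum
  omega

namespace GP

variable {n k : ℕ}

lemma adj_outer_iff (h1 : (1 : ZMod n) ≠ 0) (i : ZMod n) (w : Bool × ZMod n) :
    (GP n k).Adj (false, i) w ↔ w ∈ ({(false, i - 1), (false, i + 1), (true, i)} : Finset _) := by
  obtain ⟨_ | _, j⟩ := w <;> simp [GP, SimpleGraph.fromRel_adj]
  · constructor
    · rintro ⟨-, rfl | rfl⟩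
      · exact Or.inr rfl
      · exact Or.inl (by ring)
    · rintro (rfl | rfl)
      · exact ⟨fun h => h1 (by linear_combination h), Or.inr (by ring)⟩
      · exact ⟨fun h => h1 (by linear_combination -h), Or.inl rfl⟩

lemma adj_inner_iff (hk : (k : ZMod n) ≠ 0) (i : ZMod n) (w : Bool × ZMod n) :
    (GP n k).Adj (true, i) w ↔ w ∈ ({(true, i - k), (true, i + k), (false, i)} : Finset _) := by
  obtain ⟨_ | _, j⟩ := w <;> simp [GP, SimpleGraph.fromRel_adj]
  · exact eq_comm
  · constructor
    · rintro ⟨-, rfl | rfl⟩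
      · exact Or.inr rfl
      · exact Or.inl (by ring)
    · rintro (rfl | rfl)
      · exact ⟨fun h => hk (by linear_combination h), Or.inr (by ring)⟩
      · exact ⟨fun h => hk (by linear_combination -h), Or.inl rfl⟩

variable {T : Bool × ZMod n → Fin 2}

lemma outer_closedNbhd_white_eq_one (hT : IsPerfectColoring (GP n k) T !![0, 3; 1, 2])
    (h2 : (2 : ZMod n) ≠ 0) (i : ZMod n) :
    whiteIndicator T (false, i - 1) + whiteIndicator T (false, i + 1) +
      whiteIndicator T (true, i) + whiteIndicator T (false, i) = 1 := by
  have h1 : (1 : ZMod n) ≠ 0 := fun h => h2 (by linear_combination 2 * h)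
  have hdist : i - 1 ≠ i + 1 := fun h => h2 (by linear_combination -h)
  rw [← hT.closedNbhd_white_eq_one (false, i),
    ncard_adj_white_eq_sum (adj_outer_iff h1 i), Finset.sum_insert (by simp [hdist]),
    Finset.sum_insert (by simp), Finset.sum_singleton]
  ring

lemma inner_closedNbhd_white_eq_one (hT : IsPerfectColoring (GP n k) T !![0, 3; 1, 2])
    (h2k : (2 * k : ZMod n) ≠ 0) (i : ZMod n) :
    whiteIndicator T (true, i - k) + whiteIndicator T (true, i + k) +
      whiteIndicator T (false, i) + whiteIndicator T (true, i) = 1 := by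
  have hdist : i - k ≠ i + k := fun h => h2k (by linear_combination -h)
  rw [← hT.closedNbhd_white_eq_one (true, i),
    ncard_adj_white_eq_sum (adj_inner_iff (right_ne_zero_of_mul h2k) i),
    Finset.sum_insert (by simp [hdist]), Finset.sum_insert (by simp), Finset.sum_singleton]
  ring

theorem four_dvd_of_isPerfectColoring [NeZero n] (h2 : (2 : ZMod n) ≠ 0)
    (h2k : (2 * k : ZMod n) ≠ 0) (hT : IsPerfectColoring (GP n k) T !![0, 3; 1, 2]) :
    4 ∣ n := by
  have houter := ZMod.three_mul_sum_add_sum_eq (fun i => whiteIndicator T (false, i))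
    (fun i => whiteIndicator T (true, i)) 1 (outer_closedNbhd_white_eq_one hT h2)
  have hinner := ZMod.three_mul_sum_add_sum_eq (fun i => whiteIndicator T (true, i))
    (fun i => whiteIndicator T (false, i)) k (inner_closedNbhd_white_eq_one hT h2k)
  omega

end GP

theorem stmt_8 (n : ℕ) (hn : 7 ≤ n) (hndvd : ¬ 4 ∣ n) (T : Bool × ZMod n → Fin 2) :
    ¬ IsPerfectColoring (GP n 3) T !![0, 3; 1, 2] := by
  have : NeZero n := ⟨by omega⟩
  have cast_ne_zero (m : ℕ) (hm : 0 < m) (hmn : m < n) : (m : ZMod n) ≠ 0 := by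
    rw [Ne, ZMod.natCast_eq_zero_iff]
    exact Nat.not_dvd_of_pos_of_lt hm hmn
  intro hT
  refine hndvd (GP.four_dvd_of_isPerfectColoring ?_ ?_ hT)
  · exact_mod_cast cast_ne_zero 2 (by norm_num) (by omega)
  · exact_mod_cast cast_ne_zero 6 (by norm_num) (by omega)
end

section
/- For every m >= 2 and t >= 0 with 5t+2 < 5m/2, the generalized Petersen graph GP(5m, 5t+2) admits a perfect 2-coloring with parameter matrix [[0,3],[2,1]]; explicitly, the map T with T(a_{5i+1}) = T(a_{5i+4}) = T(b_{5i+2}) = T(b_{5i+3}) = 1 and T of all other vertices equal to 2 is such a coloring. -/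
/-!
Reducing indices mod 5 maps `GP (5 * m) (5 * t + 2)` onto `GP 5 2`, the Petersen graph, and
since `5 ∣ 5 * m` and `5 * t + 2 ≡ 2 [MOD 5]` it sends the three distinct neighbours of each
vertex bijectively to the three neighbours of its image: it is a covering map. Perfect colorings
pull back along coverings, and the given coloring is the pullback of a perfect coloring of the
Petersen graph, which is checked by enumeration.
-/

theorem List.ncard_setOf_mem_and {α : Type*} {l : List α} (hl : l.Nodup) (p : α → Prop)
    [DecidablePred p] : {x | x ∈ l ∧ p x}.ncard = l.countP p := by
  classical
  have hset : {x | x ∈ l ∧ p x} = ↑(l.filter p).toFinset := by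
    ext x; simp
  rw [hset, Set.ncard_coe_finset, List.toFinset_card_of_nodup (hl.filter _),
    List.countP_eq_length_filter]

theorem ZMod.natCast_ne_zero_of_pos_of_lt {a n : ℕ} (h0 : 0 < a) (h : a < n) :
    (a : ZMod n) ≠ 0 :=
  (ZMod.natCast_eq_zero_iff a n).not.mpr (Nat.not_dvd_of_pos_of_lt h0 h)

theorem ZMod.val_castHom {n d : ℕ} [NeZero n] (h : d ∣ n) (i : ZMod n) :
    (ZMod.castHom h (ZMod d) i).val = i.val % d := by
  rw [ZMod.castHom_apply, ZMod.cast_eq_val, ZMod.val_natCast]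

namespace GP

def neighborList {R : Type*} [Ring R] (κ : R) : Bool × R → List (Bool × R)
  | (false, i) => [(false, i + 1), (false, i - 1), (true, i)]
  | (true, i) => [(true, i + κ), (true, i - κ), (false, i)]

theorem neighborList_map {R S : Type*} [Ring R] [Ring S] (f : R →+* S) (κ : R) (v : Bool × R) :
    (neighborList κ v).map (Prod.map id f) = neighborList (f κ) (Prod.map id f v) := by
  rcases v with ⟨_ | _, i⟩ <;> simp [neighborList]

theorem nodup_neighborList {R : Type*} [Ring R] {κ : R} (h2 : (2 : R) ≠ 0) (h2κ : 2 * κ ≠ 0)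
    (v : Bool × R) : (neighborList κ v).Nodup := by
  rcases v with ⟨_ | _, i⟩ <;> simp [neighborList]
  · intro h
    rw [← one_add_one_eq_two, ← add_sub_sub_cancel i, h, sub_self] at h2
    exact h2 rfl
  · intro h
    rw [two_mul, ← add_sub_sub_cancel i, h, sub_self] at h2κ
    exact h2κ rfl

theorem adj_iff_mem_neighborList {n k : ℕ} (h1 : (1 : ZMod n) ≠ 0) (hk : (k : ZMod n) ≠ 0)
    (v w : Bool × ZMod n) : (GP n k).Adj v w ↔ w ∈ neighborList (k : ZMod n) v := by
  rcases v with ⟨_ | _, i⟩ <;> rcases w with ⟨_ | _, j⟩ <;> simp [GP, neighborList]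
  · grind
  · exact eq_comm
  · grind

theorem ncard_adj_and {n k : ℕ} (h2 : (2 : ZMod n) ≠ 0) (h2k : 2 * (k : ZMod n) ≠ 0)
    (v : Bool × ZMod n) (p : Bool × ZMod n → Prop) [DecidablePred p] :
    {w | (GP n k).Adj v w ∧ p w}.ncard = (neighborList (k : ZMod n) v).countP p := by
  have h1 : (1 : ZMod n) ≠ 0 := fun h => h2 (by rw [← one_add_one_eq_two, h, add_zero])
  have hk : (k : ZMod n) ≠ 0 := fun h => h2k (by rw [h, mul_zero])
  simp_rw [adj_iff_mem_neighborList h1 hk]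
  exact List.ncard_setOf_mem_and (nodup_neighborList h2 h2k v) p

end GP

theorem IsPerfectColoring.comp_GP {n k d l : ℕ} {c : Bool × ZMod d → Fin 2}
    {A : Matrix (Fin 2) (Fin 2) ℕ} (hc : IsPerfectColoring (GP d l) c A)
    (h2 : (2 : ZMod n) ≠ 0) (h2k : 2 * (k : ZMod n) ≠ 0)
    (h2' : (2 : ZMod d) ≠ 0) (h2l : 2 * (l : ZMod d) ≠ 0)
    (π : ZMod n →+* ZMod d) (hπ : Function.Surjective π) (hkl : π k = l) :
    IsPerfectColoring (GP n k) (c ∘ Prod.map id π) A := by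
  refine ⟨hc.1.comp (Function.surjective_id.prodMap hπ), fun v j => ?_⟩
  rw [GP.ncard_adj_and h2 h2k, Function.comp_apply, ← hc.2 _ j, GP.ncard_adj_and h2' h2l,
    ← hkl, ← GP.neighborList_map, List.countP_map]
  rfl

def petersenColoring (v : Bool × ZMod 5) : Fin 2 :=
  if (v.1 = false ∧ (v.2.val = 1 ∨ v.2.val = 4)) ∨ (v.1 = true ∧ (v.2.val = 2 ∨ v.2.val = 3))
  then 0 else 1

theorem isPerfectColoring_petersenColoring :
    IsPerfectColoring (GP 5 2) petersenColoring !![0, 3; 2, 1] := by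
  refine ⟨fun j => ?_, fun v j => ?_⟩
  · fin_cases j
    exacts [⟨(false, 1), rfl⟩, ⟨(false, 0), rfl⟩]
  · rw [GP.ncard_adj_and (by decide) (by decide)]
    revert v j
    decide

theorem stmt_10_general (m t : ℕ) (hk : 2 * (5 * t + 2) < 5 * m) :
    IsPerfectColoring (GP (5 * m) (5 * t + 2))
      (fun v =>
        if (v.1 = false ∧ (v.2.val % 5 = 1 ∨ v.2.val % 5 = 4)) ∨
           (v.1 = true ∧ (v.2.val % 5 = 2 ∨ v.2.val % 5 = 3)) then 0 else 1)
      !![0, 3; 2, 1] := by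
  have h5 : 5 ∣ 5 * m := dvd_mul_right 5 m
  have : NeZero (5 * m) := ⟨by omega⟩
  set π := ZMod.castHom h5 (ZMod 5)
  have h2 : (2 : ZMod (5 * m)) ≠ 0 := by
    exact_mod_cast ZMod.natCast_ne_zero_of_pos_of_lt (n := 5 * m) (a := 2) two_pos (by omega)
  have h2k : 2 * ((5 * t + 2 : ℕ) : ZMod (5 * m)) ≠ 0 := by
    exact_mod_cast ZMod.natCast_ne_zero_of_pos_of_lt (by omega) hk
  have hπk : π (5 * t + 2 : ℕ) = (2 : ℕ) := by
    rw [map_natCast, ZMod.natCast_eq_natCast_iff']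
    omega
  have hT : (fun v : Bool × ZMod (5 * m) =>
      if (v.1 = false ∧ (v.2.val % 5 = 1 ∨ v.2.val % 5 = 4)) ∨
        (v.1 = true ∧ (v.2.val % 5 = 2 ∨ v.2.val % 5 = 3)) then (0 : Fin 2) else 1) =
      petersenColoring ∘ Prod.map id π := by
    funext v
    simp only [Function.comp_apply, Prod.map_fst, Prod.map_snd, id, petersenColoring, π,
      ZMod.val_castHom]
  rw [hT]
  exact isPerfectColoring_petersenColoring.comp_GP h2 h2k (by decide) (by decide) π
    (ZMod.castHom_surjective h5) hπk

theorem stmt_10 (m t : ℕ) (hm : 2 ≤ m) (hk : 2 * (5 * t + 2) < 5 * m) :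
    IsPerfectColoring (GP (5 * m) (5 * t + 2))
      (fun v =>
        if (v.1 = false ∧ (v.2.val % 5 = 1 ∨ v.2.val % 5 = 4)) ∨
           (v.1 = true ∧ (v.2.val % 5 = 2 ∨ v.2.val % 5 = 3)) then 0 else 1)
      !![0, 3; 2, 1] :=
  stmt_10_general m t hk
end
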